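/- Suppose a discrete-time system x(k+1) = φ(x(k), u(k)) admits, for every x₀ with ‖x₀‖ ≤ R: (a) a 'free' N-step control achieving ∑_{j=1}^{N}(‖x(j)‖²+‖u(j-1)‖²) ≤ σ‖x₀‖² and ‖x(N)‖² ≤ β‖x₀‖²; and (b) a 'constrained' N-step control achieving ∑_{j=1}^{N}(‖x(j)‖²+‖u(j-1)‖²) ≤ σ‖x₀‖² and ‖x(N)‖² ≤ ‖x₀‖². Then alternating (b) then (a) forever from any ‖x(0)‖ ≤ R yields an infinite control sequence with total cost at most ((1+β)/(1-β))σ‖x(0)‖². -/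

import Mathlib

/-!
Repeating the free `N`-step control from the state reached at the end of each block gives block
start states with `‖x(pN)‖² ≤ βᵖ ‖x(0)‖²`; these stay in the ball of radius `R`, so the `p`-th
block costs at most `σ βᵖ ‖x(0)‖²`, and the geometric series bounds the total cost by
`σ ‖x(0)‖² / (1 - β) ≤ (1 + β) / (1 - β) · σ ‖x(0)‖²`.
-/

/-- The trajectory of the system x(k+1) = φ(x(k), u(k)). -/
def traj {α γ : Type*} (φ : α → γ → α) (x₀ : α) (u : ℕ → γ) : ℕ → α
  | 0 => x₀
  | k + 1 => φ (traj φ x₀ u k) (u k)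

open Finset

section Trajectory

variable {α γ : Type*} (φ : α → γ → α)

@[simp]
theorem traj_zero (x : α) (u : ℕ → γ) : traj φ x u 0 = x := rfl

@[simp]
theorem traj_succ (x : α) (u : ℕ → γ) (k : ℕ) :
    traj φ x u (k + 1) = φ (traj φ x u k) (u k) := rfl

theorem traj_add (x : α) (u : ℕ → γ) (a b : ℕ) :
    traj φ x u (a + b) = traj φ (traj φ x u a) (fun k => u (a + k)) b := by
  induction b with
  | zero => rfl
  | succ b ih => rw [← add_assoc, traj_succ, ih, traj_succ]

theorem traj_congr {x : α} {u v : ℕ → γ} {r : ℕ} (h : ∀ k < r, u k = v k) :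
    traj φ x u r = traj φ x v r := by
  induction r with
  | zero => rfl
  | succ r ih =>
    rw [traj_succ, traj_succ, ih fun k hk => h k (by omega), h r (Nat.lt_succ_self r)]

end Trajectory

section BlockControl

variable {α γ : Type*} (φ : α → γ → α) (N : ℕ) (F : α → ℕ → γ)

def blockStarts (x₀ : α) : ℕ → α
  | 0 => x₀
  | p + 1 => traj φ (blockStarts x₀ p) (F (blockStarts x₀ p)) N

def blockControl (x₀ : α) (k : ℕ) : γ :=
  F (blockStarts φ N F x₀ (k / N)) (k % N)

variable {φ N F}

theorem blockControl_mul_add (x₀ : α) (p : ℕ) {r : ℕ} (hr : r < N) :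
    blockControl φ N F x₀ (p * N + r) = F (blockStarts φ N F x₀ p) r := by
  have hN : 0 < N := by omega
  rw [blockControl, mul_comm, Nat.mul_add_div hN, Nat.mul_add_mod, Nat.div_eq_of_lt hr,
    Nat.mod_eq_of_lt hr, add_zero]

theorem traj_blockControl_mul (x₀ : α) (p : ℕ) :
    traj φ x₀ (blockControl φ N F x₀) (p * N) = blockStarts φ N F x₀ p := by
  induction p with
  | zero => simp [blockStarts]
  | succ p ih =>
    rw [add_mul, one_mul, traj_add, ih, blockStarts]
    exact traj_congr φ fun k hk => blockControl_mul_add x₀ p hk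

theorem traj_blockControl_mul_add (x₀ : α) (p : ℕ) {r : ℕ} (hr : r ≤ N) :
    traj φ x₀ (blockControl φ N F x₀) (p * N + r) =
      traj φ (blockStarts φ N F x₀ p) (F (blockStarts φ N F x₀ p)) r := by
  rw [traj_add, traj_blockControl_mul]
  exact traj_congr φ fun k hk => blockControl_mul_add x₀ p (by omega)

theorem sum_block_blockControl {M : Type*} [AddCommMonoid M] (g : α → γ → M) (x₀ : α) (p : ℕ) :
    ∑ r ∈ range N, g (traj φ x₀ (blockControl φ N F x₀) (p * N + r + 1))
        (blockControl φ N F x₀ (p * N + r)) =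
      ∑ r ∈ range N, g (traj φ (blockStarts φ N F x₀ p) (F (blockStarts φ N F x₀ p)) (r + 1))
        (F (blockStarts φ N F x₀ p) r) := by
  refine sum_congr rfl fun r hr => ?_
  have hr : r < N := mem_range.mp hr
  rw [add_assoc, traj_blockControl_mul_add x₀ p hr, blockControl_mul_add x₀ p hr]

theorem norm_blockStarts_le [Norm α] {R : ℝ}
    (hF : ∀ x : α, ‖x‖ ≤ R → ‖traj φ x (F x) N‖ ≤ ‖x‖) {x₀ : α} (hx₀ : ‖x₀‖ ≤ R) (p : ℕ) :
    ‖blockStarts φ N F x₀ p‖ ≤ ‖x₀‖ := by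
  induction p with
  | zero => rfl
  | succ p ih => exact (hF _ (ih.trans hx₀)).trans ih

theorem norm_sq_blockStarts_le [Norm α] {R β : ℝ} (hβ : 0 ≤ β)
    (hF : ∀ x : α, ‖x‖ ≤ R → ‖traj φ x (F x) N‖ ^ 2 ≤ β * ‖x‖ ^ 2) {x₀ : α}
    (hR : ∀ p, ‖blockStarts φ N F x₀ p‖ ≤ R) (p : ℕ) :
    ‖blockStarts φ N F x₀ p‖ ^ 2 ≤ β ^ p * ‖x₀‖ ^ 2 := by
  induction p with
  | zero => simp [blockStarts]
  | succ p ih =>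
    calc ‖blockStarts φ N F x₀ (p + 1)‖ ^ 2 ≤ β * ‖blockStarts φ N F x₀ p‖ ^ 2 := hF _ (hR p)
      _ ≤ β * (β ^ p * ‖x₀‖ ^ 2) := mul_le_mul_of_nonneg_left ih hβ
      _ = β ^ (p + 1) * ‖x₀‖ ^ 2 := by ring

end BlockControl

theorem Finset.sum_range_mul_eq_sum_sum {M : Type*} [AddCommMonoid M] (f : ℕ → M) (P N : ℕ) :
    ∑ j ∈ range (P * N), f j = ∑ p ∈ range P, ∑ r ∈ range N, f (p * N + r) := by
  induction P with
  | zero => simp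
  | succ P ih => rw [add_mul, one_mul, sum_range_add, ih, sum_range_succ]

theorem Finset.sum_Icc_one_eq_sum_range {M : Type*} [AddCommMonoid M] (f : ℕ → M) (N : ℕ) :
    ∑ j ∈ Icc 1 N, f j = ∑ r ∈ range N, f (r + 1) := by
  rw [range_eq_Ico, sum_Ico_add', ← Ico_add_one_right_eq_Icc]

theorem summable_and_tsum_le_of_sum_block_le {f : ℕ → ℝ} {N : ℕ} {C β : ℝ} (hN : 0 < N)
    (hf : ∀ j, 0 ≤ f j) (hβ0 : 0 ≤ β) (hβ1 : β < 1)
    (hblock : ∀ p, ∑ r ∈ range N, f (p * N + r) ≤ C * β ^ p) :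
    Summable f ∧ ∑' j, f j ≤ C / (1 - β) := by
  have hC : 0 ≤ C := by simpa using (sum_nonneg fun r _ => hf (0 * N + r)).trans (hblock 0)
  have hpartial : ∀ M, ∑ j ∈ range M, f j ≤ C / (1 - β) := fun M => calc
    ∑ j ∈ range M, f j ≤ ∑ j ∈ range ((M / N + 1) * N), f j := by
        refine sum_le_sum_of_subset_of_nonneg (range_subset_range.mpr ?_) fun j _ _ => hf j
        rw [add_one_mul]
        exact (Nat.lt_div_mul_add hN).le
    _ = ∑ p ∈ range (M / N + 1), ∑ r ∈ range N, f (p * N + r) := sum_range_mul_eq_sum_sum ..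
    _ ≤ ∑ p ∈ range (M / N + 1), C * β ^ p := sum_le_sum fun p _ => hblock p
    _ = C * ∑ p ∈ Ico 0 (M / N + 1), β ^ p := by rw [mul_sum, range_eq_Ico]
    _ ≤ C * (β ^ 0 / (1 - β)) := mul_le_mul_of_nonneg_left (geom_sum_Ico_le_of_lt_one hβ0 hβ1) hC
    _ = C / (1 - β) := by ring
  exact ⟨summable_of_sum_range_le hf hpartial, Real.tsum_le_of_sum_range_le hf hpartial⟩

theorem stmt14_general (n m N : ℕ) (hN : 1 ≤ N)
    (φ : EuclideanSpace ℝ (Fin n) → EuclideanSpace ℝ (Fin m) → EuclideanSpace ℝ (Fin n))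
    (β σ R : ℝ) (h0 : 0 ≤ β) (h1 : β < 1) (hσ : 0 ≤ σ)
    (hfree : ∀ x₀ : EuclideanSpace ℝ (Fin n), ‖x₀‖ ≤ R →
      ∃ u : ℕ → EuclideanSpace ℝ (Fin m),
        (∑ j ∈ Finset.Icc 1 N, (‖traj φ x₀ u j‖ ^ 2 + ‖u (j - 1)‖ ^ 2)) ≤ σ * ‖x₀‖ ^ 2 ∧
        ‖traj φ x₀ u N‖ ^ 2 ≤ β * ‖x₀‖ ^ 2) :
    ∀ x₀ : EuclideanSpace ℝ (Fin n), ‖x₀‖ ≤ R →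
      ∃ u : ℕ → EuclideanSpace ℝ (Fin m),
        Summable (fun j : ℕ => ‖traj φ x₀ u (j + 1)‖ ^ 2 + ‖u j‖ ^ 2) ∧
        (∑' j : ℕ, (‖traj φ x₀ u (j + 1)‖ ^ 2 + ‖u j‖ ^ 2)) ≤
          (1 + β) / (1 - β) * σ * ‖x₀‖ ^ 2 := by
  intro x₀ hx₀
  choose! F hFcost hFdecay using hfree
  set X := blockStarts φ N F x₀
  have hnonexp : ∀ x, ‖x‖ ≤ R → ‖traj φ x (F x) N‖ ≤ ‖x‖ := fun x hx =>
    (pow_le_pow_iff_left₀ (norm_nonneg _) (norm_nonneg _) two_ne_zero).mp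
      ((hFdecay x hx).trans (mul_le_of_le_one_left (sq_nonneg _) h1.le))
  have hR : ∀ p, ‖X p‖ ≤ R := fun p => (norm_blockStarts_le hnonexp hx₀ p).trans hx₀
  have hblock : ∀ p, ∑ r ∈ range N, (‖traj φ x₀ (blockControl φ N F x₀) (p * N + r + 1)‖ ^ 2 +
      ‖blockControl φ N F x₀ (p * N + r)‖ ^ 2) ≤ σ * ‖x₀‖ ^ 2 * β ^ p := fun p => calc
    _ = ∑ j ∈ Icc 1 N, (‖traj φ (X p) (F (X p)) j‖ ^ 2 + ‖F (X p) (j - 1)‖ ^ 2) := by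
        rw [sum_block_blockControl (fun x v => ‖x‖ ^ 2 + ‖v‖ ^ 2), sum_Icc_one_eq_sum_range]
        simp only [Nat.add_sub_cancel, X]
    _ ≤ σ * ‖X p‖ ^ 2 := hFcost _ (hR p)
    _ ≤ σ * (β ^ p * ‖x₀‖ ^ 2) :=
        mul_le_mul_of_nonneg_left (norm_sq_blockStarts_le h0 hFdecay hR p) hσ
    _ = σ * ‖x₀‖ ^ 2 * β ^ p := by ring
  obtain ⟨hsum, htsum⟩ := summable_and_tsum_le_of_sum_block_le
    (f := fun j => ‖traj φ x₀ (blockControl φ N F x₀) (j + 1)‖ ^ 2 + ‖blockControl φ N F x₀ j‖ ^ 2)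
    hN (fun j => by positivity) h0 h1 hblock
  refine ⟨blockControl φ N F x₀, hsum, htsum.trans ?_⟩
  have hβ : 0 < 1 - β := sub_pos.mpr h1
  calc σ * ‖x₀‖ ^ 2 / (1 - β) = 1 / (1 - β) * σ * ‖x₀‖ ^ 2 := by ring
    _ ≤ (1 + β) / (1 - β) * σ * ‖x₀‖ ^ 2 := by gcongr; linarith

theorem stmt14 (n m N : ℕ) (hN : 1 ≤ N)
    (φ : EuclideanSpace ℝ (Fin n) → EuclideanSpace ℝ (Fin m) → EuclideanSpace ℝ (Fin n))
    (hφ0 : φ 0 0 = 0) (β σ R : ℝ) (h0 : 0 ≤ β) (h1 : β < 1) (hσ : 0 ≤ σ)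
    (hfree : ∀ x₀ : EuclideanSpace ℝ (Fin n), ‖x₀‖ ≤ R →
      ∃ u : ℕ → EuclideanSpace ℝ (Fin m),
        (∑ j ∈ Finset.Icc 1 N, (‖traj φ x₀ u j‖ ^ 2 + ‖u (j - 1)‖ ^ 2)) ≤ σ * ‖x₀‖ ^ 2 ∧
        ‖traj φ x₀ u N‖ ^ 2 ≤ β * ‖x₀‖ ^ 2)
    (hconstr : ∀ x₀ : EuclideanSpace ℝ (Fin n), ‖x₀‖ ≤ R →
      ∃ u : ℕ → EuclideanSpace ℝ (Fin m),
        (∑ j ∈ Finset.Icc 1 N, (‖traj φ x₀ u j‖ ^ 2 + ‖u (j - 1)‖ ^ 2)) ≤ σ * ‖x₀‖ ^ 2 ∧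
        ‖traj φ x₀ u N‖ ^ 2 ≤ ‖x₀‖ ^ 2) :
    ∀ x₀ : EuclideanSpace ℝ (Fin n), ‖x₀‖ ≤ R →
      ∃ u : ℕ → EuclideanSpace ℝ (Fin m),
        Summable (fun j : ℕ => ‖traj φ x₀ u (j + 1)‖ ^ 2 + ‖u j‖ ^ 2) ∧
        (∑' j : ℕ, (‖traj φ x₀ u (j + 1)‖ ^ 2 + ‖u j‖ ^ 2)) ≤
          (1 + β) / (1 - β) * σ * ‖x₀‖ ^ 2 :=
  stmt14_general n m N hN φ β σ R h0 h1 hσ hfree
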